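/- arXiv:1407.4829 — 3 statements merged into one kernel-verified Lean document; each statement's English description precedes it below -/
import Mathlib

section
/- Let V be a finite-dimensional complex inner product space, and let A and B be self-adjoint linear operators on V. Let 𝓗 be a nonzero subspace of V, let α and β be real numbers such that A v = α v and B v = β v for every v ∈ 𝓗, and suppose ⟨φ, A φ⟩ ≤ α ‖φ‖² and ⟨φ, B φ⟩ ≤ β ‖φ‖² for all φ ∈ V (i.e., α and β are the largest eigenvalues of A and B respectively). Suppose further there is Δ_A > 0 such that ⟨φ, A φ⟩ ≤ (α − Δ_A) ‖φ‖² for every φ in the orthogonal complement of 𝓗. Then for every real λ with 0 ≤ λ and 2 λ ‖B‖ < Δ_A, the operator C := A − λ B satisfies C v = (α − λ β) v for all v ∈ 𝓗, ⟨φ, C φ⟩ ≤ (α − λ β) ‖φ‖² for all φ ∈ V, and the eigenspace of C for the eigenvalue α − λ β is exactly 𝓗. -/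
/-!
Split `φ = v + w` along `H ⊕ Hᗮ`. On `H` the operator `C = A - λ • B` acts as `μ = α - λ β`,
and by symmetry `⟪v, C w⟫ = ⟪C v, w⟫ = μ ⟪v, w⟫ = 0`, so `re ⟪φ, C φ⟫ = μ ‖v‖² + re ⟪w, C w⟫`.
On `Hᗮ` the gap of `A` survives the perturbation:
`re ⟪w, C w⟫ ≤ (α - Δ_A + λ ‖B‖) ‖w‖²`, and `α - Δ_A + λ ‖B‖ < α - λ ‖B‖ ≤ μ` since `β ≤ ‖B‖`.
Hence `μ` bounds the numerical range of `C`, and a `μ`-eigenvector has no component in `Hᗮ`.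
-/

open scoped InnerProductSpace

section

open RCLike

variable {𝕜 E : Type*} [RCLike 𝕜] [NormedAddCommGroup E] [InnerProductSpace 𝕜 E]

theorem ContinuousLinearMap.norm_le_opNorm_of_apply_eq_smul {T : E →L[𝕜] E} {c : 𝕜} {v : E}
    (hv : v ≠ 0) (hTv : T v = c • v) : ‖c‖ ≤ ‖T‖ := by
  have h := T.le_opNorm v
  rw [hTv, norm_smul] at h
  exact le_of_mul_le_mul_right h (norm_pos_iff.mpr hv)

theorem ContinuousLinearMap.re_inner_sub_ofReal_smul_apply_le (A B : E →L[𝕜] E) {c : ℝ}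
    (hc : 0 ≤ c) (w : E) :
    re ⟪w, (A - (c : 𝕜) • B) w⟫_𝕜 ≤ re ⟪w, A w⟫_𝕜 + c * (‖B‖ * ‖w‖ ^ 2) := by
  have hB : -re ⟪w, B w⟫_𝕜 ≤ ‖B‖ * ‖w‖ ^ 2 :=
    calc -re ⟪w, B w⟫_𝕜 ≤ ‖⟪w, B w⟫_𝕜‖ := (neg_le_abs _).trans (abs_re_le_norm _)
      _ ≤ ‖w‖ * ‖B w‖ := norm_inner_le_norm w (B w)
      _ ≤ ‖w‖ * (‖B‖ * ‖w‖) := by gcongr; exact B.le_opNorm w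
      _ = ‖B‖ * ‖w‖ ^ 2 := by ring
  have hre : re ⟪w, (A - (c : 𝕜) • B) w⟫_𝕜 = re ⟪w, A w⟫_𝕜 - c * re ⟪w, B w⟫_𝕜 := by
    simp only [sub_apply, smul_apply, inner_sub_right, inner_smul_right, map_sub, re_ofReal_mul]
  rw [hre]
  nlinarith

namespace LinearMap

variable {T : E →ₗ[𝕜] E} {K : Submodule 𝕜 E} {μ ν : ℝ}

theorem IsSymmetric.re_inner_add_map_add (hT : T.IsSymmetric) {v w : E}
    (hv : T v = (μ : 𝕜) • v) (hvw : ⟪v, w⟫_𝕜 = 0) :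
    re ⟪v + w, T (v + w)⟫_𝕜 = μ * ‖v‖ ^ 2 + re ⟪w, T w⟫_𝕜 := by
  have hwv : ⟪w, v⟫_𝕜 = 0 := inner_eq_zero_symm.mp hvw
  have hvTw : ⟪v, T w⟫_𝕜 = 0 := by rw [← hT v w, hv, inner_smul_left, hvw, mul_zero]
  rw [map_add, hv, inner_add_left, inner_add_right, inner_add_right, inner_smul_right,
    inner_smul_right, hvTw, hwv, inner_self_eq_norm_sq_to_K]
  simp only [mul_zero, add_zero, zero_add, map_add]
  norm_cast

theorem IsSymmetric.re_inner_map_self_le [K.HasOrthogonalProjection] (hT : T.IsSymmetric)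
    (hK : ∀ v ∈ K, T v = (μ : 𝕜) • v)
    (hgap : ∀ w ∈ Kᗮ, re ⟪w, T w⟫_𝕜 ≤ ν * ‖w‖ ^ 2) (hνμ : ν ≤ μ) (φ : E) :
    re ⟪φ, T φ⟫_𝕜 ≤ μ * ‖φ‖ ^ 2 := by
  obtain ⟨v, hv, w, hw, rfl⟩ := K.exists_add_mem_mem_orthogonal φ
  have hvw : ⟪v, w⟫_𝕜 = 0 := K.inner_right_of_mem_orthogonal hv hw
  rw [hT.re_inner_add_map_add (hK v hv) hvw, sq ‖v + w‖,
    norm_add_sq_eq_norm_sq_add_norm_sq_of_inner_eq_zero v w hvw]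
  nlinarith [hgap w hw, sq_nonneg ‖w‖]

theorem eigenspace_eq_of_forall_re_inner_le [K.HasOrthogonalProjection]
    (hK : ∀ v ∈ K, T v = (μ : 𝕜) • v)
    (hgap : ∀ w ∈ Kᗮ, re ⟪w, T w⟫_𝕜 ≤ ν * ‖w‖ ^ 2) (hνμ : ν < μ) :
    Module.End.eigenspace T (μ : 𝕜) = K := by
  refine le_antisymm (fun φ hφ => ?_) (fun v hv => Module.End.mem_eigenspace_iff.mpr (hK v hv))
  rw [Module.End.mem_eigenspace_iff] at hφ
  obtain ⟨v, hv, w, hw, rfl⟩ := K.exists_add_mem_mem_orthogonal φ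
  have hTw : T w = (μ : 𝕜) • w := by
    rw [map_add, hK v hv, smul_add] at hφ
    exact add_left_cancel hφ
  have hw_sq : μ * ‖w‖ ^ 2 ≤ ν * ‖w‖ ^ 2 := by
    simpa only [hTw, inner_smul_right, inner_self_eq_norm_sq_to_K, ← ofReal_pow, re_ofReal_mul,
      ofReal_re] using hgap w hw
  have hw0 : w = 0 := by
    by_contra hne
    have : 0 < ‖w‖ ^ 2 := by positivity
    nlinarith
  simpa [hw0] using hv

end LinearMap

end

theorem common_top_eigenspace_stable_general
    {V : Type*} [NormedAddCommGroup V] [InnerProductSpace ℂ V] [FiniteDimensional ℂ V]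
    (A B : V →L[ℂ] V) (hA : IsSelfAdjoint A) (hB : IsSelfAdjoint B)
    (H : Submodule ℂ V) (hH : H ≠ ⊥) (α β : ℝ)
    (hAH : ∀ v ∈ H, A v = (α : ℂ) • v) (hBH : ∀ v ∈ H, B v = (β : ℂ) • v)
    (ΔA : ℝ)
    (hgap : ∀ φ ∈ Hᗮ, (⟪φ, A φ⟫_ℂ).re ≤ (α - ΔA) * ‖φ‖ ^ 2)
    (lam : ℝ) (hlam0 : 0 ≤ lam) (hlam : 2 * lam * ‖B‖ < ΔA) :
    (∀ v ∈ H, (A - (lam : ℂ) • B) v = ((α - lam * β : ℝ) : ℂ) • v) ∧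
    (∀ φ : V, (⟪φ, (A - (lam : ℂ) • B) φ⟫_ℂ).re ≤ (α - lam * β) * ‖φ‖ ^ 2) ∧
    Module.End.eigenspace (A - (lam : ℂ) • B : V →L[ℂ] V).toLinearMap
      ((α - lam * β : ℝ) : ℂ) = H := by
  have hC : IsSelfAdjoint (A - (lam : ℂ) • B) :=
    hA.sub (.smul (Complex.conj_ofReal lam) hB)
  have hCH : ∀ v ∈ H, (A - (lam : ℂ) • B) v = ((α - lam * β : ℝ) : ℂ) • v := by
    intro v hv
    rw [sub_apply, smul_apply, hAH v hv, hBH v hv, smul_smul, ← sub_smul]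
    push_cast
    rfl
  have hβ : β ≤ ‖B‖ := by
    obtain ⟨v, hv, hv0⟩ := Submodule.exists_mem_ne_zero_of_ne_bot hH
    have := B.norm_le_opNorm_of_apply_eq_smul hv0 (hBH v hv)
    rw [Complex.norm_real, Real.norm_eq_abs] at this
    exact (le_abs_self β).trans this
  have hgapC : ∀ w ∈ Hᗮ, (⟪w, (A - (lam : ℂ) • B) w⟫_ℂ).re ≤ (α - ΔA + lam * ‖B‖) * ‖w‖ ^ 2 :=
    fun w hw => by
      have hCA : (⟪w, (A - (lam : ℂ) • B) w⟫_ℂ).re ≤ (⟪w, A w⟫_ℂ).re + lam * (‖B‖ * ‖w‖ ^ 2) :=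
        A.re_inner_sub_ofReal_smul_apply_le B hlam0 w
      nlinarith [hgap w hw]
  have hνμ : α - ΔA + lam * ‖B‖ < α - lam * β := by
    linarith [mul_le_mul_of_nonneg_left hβ hlam0]
  exact ⟨hCH, hC.isSymmetric.re_inner_map_self_le hCH hgapC hνμ.le,
    LinearMap.eigenspace_eq_of_forall_re_inner_le hCH hgapC hνμ⟩

/-- Lemma 3 of the paper (first part): a common top eigenspace of self-adjoint
operators `A` and `B` remains the top eigenspace of `C = A - λ • B` for
`λ` below the critical value `Δ_A / (2‖B‖)`. -/
theorem common_top_eigenspace_stable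
    {V : Type*} [NormedAddCommGroup V] [InnerProductSpace ℂ V] [FiniteDimensional ℂ V]
    (A B : V →L[ℂ] V) (hA : IsSelfAdjoint A) (hB : IsSelfAdjoint B)
    (H : Submodule ℂ V) (hH : H ≠ ⊥) (α β : ℝ)
    (hAH : ∀ v ∈ H, A v = (α : ℂ) • v) (hBH : ∀ v ∈ H, B v = (β : ℂ) • v)
    (hAtop : ∀ φ : V, (⟪φ, A φ⟫_ℂ).re ≤ α * ‖φ‖ ^ 2)
    (hBtop : ∀ φ : V, (⟪φ, B φ⟫_ℂ).re ≤ β * ‖φ‖ ^ 2)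
    (ΔA : ℝ) (hΔA : 0 < ΔA)
    (hgap : ∀ φ ∈ Hᗮ, (⟪φ, A φ⟫_ℂ).re ≤ (α - ΔA) * ‖φ‖ ^ 2)
    (lam : ℝ) (hlam0 : 0 ≤ lam) (hlam : 2 * lam * ‖B‖ < ΔA) :
    (∀ v ∈ H, (A - (lam : ℂ) • B) v = ((α - lam * β : ℝ) : ℂ) • v) ∧
    (∀ φ : V, (⟪φ, (A - (lam : ℂ) • B) φ⟫_ℂ).re ≤ (α - lam * β) * ‖φ‖ ^ 2) ∧
    Module.End.eigenspace (A - (lam : ℂ) • B : V →L[ℂ] V).toLinearMap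
      ((α - lam * β : ℝ) : ℂ) = H :=
  common_top_eigenspace_stable_general A B hA hB H hH α β hAH hBH ΔA hgap lam hlam0 hlam
end

section
/- Let V be a finite-dimensional complex inner product space, and let A and B be self-adjoint linear operators on V. Let 𝓗 be a nonzero subspace of V, let α and β be real numbers such that A v = α v and B v = β v for every v ∈ 𝓗, and suppose ⟨φ, B φ⟩ ≤ β ‖φ‖² for all φ ∈ V. Suppose there is Δ_A > 0 such that ⟨φ, A φ⟩ ≤ (α − Δ_A) ‖φ‖² for every φ in the orthogonal complement of 𝓗. Then for every real λ with 0 ≤ λ and 2 λ ‖B‖ < Δ_A, the operator C := A − λ B satisfies ⟨φ, C φ⟩ ≤ (α − λ β − (Δ_A − 2 λ ‖B‖)) ‖φ‖² for every φ in the orthogonal complement of 𝓗; that is, C has a spectral gap of at least Δ_A − 2 λ ‖B‖ between the eigenvalue α − λ β on 𝓗 and the rest of its spectrum. -/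
/-!
Since `β` is an eigenvalue of `B`, `β ≤ ‖B‖`. On `𝓗ᗮ` the perturbation `-λB` raises the quadratic
form by at most `λ‖B‖‖φ‖²`, while on `𝓗` it moves the eigenvalue to `α - λβ ≥ α - λ‖B‖`; so the gap
shrinks by at most `2λ‖B‖`.
-/

open scoped InnerProductSpace

namespace ContinuousLinearMap

variable {𝕜 E : Type*}

theorem norm_le_opNorm_of_apply_eq_smul_s1 [NontriviallyNormedField 𝕜] [NormedAddCommGroup E]
    [NormedSpace 𝕜 E] (T : E →L[𝕜] E) {c : 𝕜} {v : E} (hv : v ≠ 0) (hTv : T v = c • v) :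
    ‖c‖ ≤ ‖T‖ := by
  refine le_of_mul_le_mul_right ?_ (norm_pos_iff.mpr hv)
  calc ‖c‖ * ‖v‖ = ‖T v‖ := by rw [hTv, norm_smul]
    _ ≤ ‖T‖ * ‖v‖ := T.le_opNorm v

variable [RCLike 𝕜] [SeminormedAddCommGroup E] [InnerProductSpace 𝕜 E]

theorem abs_re_inner_apply_le (T : E →L[𝕜] E) (x : E) :
    |RCLike.re ⟪x, T x⟫_𝕜| ≤ ‖T‖ * ‖x‖ ^ 2 :=
  calc |RCLike.re ⟪x, T x⟫_𝕜| ≤ ‖x‖ * ‖T x‖ :=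
        (RCLike.abs_re_le_norm _).trans (norm_inner_le_norm _ _)
    _ ≤ ‖x‖ * (‖T‖ * ‖x‖) := by gcongr; exact T.le_opNorm x
    _ = ‖T‖ * ‖x‖ ^ 2 := by ring

theorem re_inner_sub_smul_apply (A B : E →L[𝕜] E) (t : ℝ) (x : E) :
    RCLike.re ⟪x, (A - (t : 𝕜) • B) x⟫_𝕜 = RCLike.re ⟪x, A x⟫_𝕜 - t * RCLike.re ⟪x, B x⟫_𝕜 := by
  rw [sub_apply, smul_apply, inner_sub_right, inner_smul_right, map_sub, RCLike.re_ofReal_mul]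

end ContinuousLinearMap

theorem gap_of_perturbed_operator_general
    {V : Type*} [NormedAddCommGroup V] [InnerProductSpace ℂ V]
    (A B : V →L[ℂ] V)
    (H : Submodule ℂ V) (hH : H ≠ ⊥) (α β : ℝ)
    (hBH : ∀ v ∈ H, B v = (β : ℂ) • v)
    (ΔA : ℝ)
    (hgap : ∀ φ ∈ Hᗮ, (⟪φ, A φ⟫_ℂ).re ≤ (α - ΔA) * ‖φ‖ ^ 2)
    (lam : ℝ) (hlam0 : 0 ≤ lam) :
    ∀ φ ∈ Hᗮ, (⟪φ, (A - (lam : ℂ) • B) φ⟫_ℂ).re ≤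
      (α - lam * β - (ΔA - 2 * lam * ‖B‖)) * ‖φ‖ ^ 2 := by
  obtain ⟨v, hv, hv0⟩ := Submodule.exists_mem_ne_zero_of_ne_bot hH
  have hβ : β ≤ ‖B‖ := by
    have := B.norm_le_opNorm_of_apply_eq_smul_s1 hv0 (hBH v hv)
    rw [Complex.norm_real, Real.norm_eq_abs] at this
    exact (le_abs_self β).trans this
  intro φ hφ
  have hB : -(‖B‖ * ‖φ‖ ^ 2) ≤ (⟪φ, B φ⟫_ℂ).re := neg_le_of_abs_le (B.abs_re_inner_apply_le φ)
  calc (⟪φ, (A - (lam : ℂ) • B) φ⟫_ℂ).re = (⟪φ, A φ⟫_ℂ).re - lam * (⟪φ, B φ⟫_ℂ).re :=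
        A.re_inner_sub_smul_apply B lam φ
    _ ≤ (α - ΔA) * ‖φ‖ ^ 2 + lam * (‖B‖ * ‖φ‖ ^ 2) := by
      linarith [hgap φ hφ, mul_le_mul_of_nonneg_left hB hlam0]
    _ ≤ (α - lam * β - (ΔA - 2 * lam * ‖B‖)) * ‖φ‖ ^ 2 := by
      linarith [mul_nonneg (mul_nonneg hlam0 (sub_nonneg.2 hβ)) (sq_nonneg ‖φ‖)]

/-- Lemma 3 of the paper (gap bound): writing `λ_c = Δ_A / (2‖B‖)`, the operator
`C = A - λ • B` has a spectral gap of at least `Δ_A - 2λ‖B‖ = 2‖B‖(λ_c - λ)`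
between the eigenvalue `α - λβ` on `𝓗` and the rest of its spectrum. -/
theorem gap_of_perturbed_operator
    {V : Type*} [NormedAddCommGroup V] [InnerProductSpace ℂ V] [FiniteDimensional ℂ V]
    (A B : V →L[ℂ] V) (hA : IsSelfAdjoint A) (hB : IsSelfAdjoint B)
    (H : Submodule ℂ V) (hH : H ≠ ⊥) (α β : ℝ)
    (hAH : ∀ v ∈ H, A v = (α : ℂ) • v) (hBH : ∀ v ∈ H, B v = (β : ℂ) • v)
    (hBtop : ∀ φ : V, (⟪φ, B φ⟫_ℂ).re ≤ β * ‖φ‖ ^ 2)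
    (ΔA : ℝ) (hΔA : 0 < ΔA)
    (hgap : ∀ φ ∈ Hᗮ, (⟪φ, A φ⟫_ℂ).re ≤ (α - ΔA) * ‖φ‖ ^ 2)
    (lam : ℝ) (hlam0 : 0 ≤ lam) (hlam : 2 * lam * ‖B‖ < ΔA) :
    ∀ φ ∈ Hᗮ, (⟪φ, (A - (lam : ℂ) • B) φ⟫_ℂ).re ≤
      (α - lam * β - (ΔA - 2 * lam * ‖B‖)) * ‖φ‖ ^ 2 :=
  gap_of_perturbed_operator_general A B H hH α β hBH ΔA hgap lam hlam0
end

section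
/- Let A be a commutative algebra over the rational numbers, let R be a finite set with |R| = n ≥ 1, and let p : R → A. Then ∑_{i=1}^{n} (1/i) · ∑_{S ⊆ R, |S| = i} (∏_{s ∈ S} (1 − p(s))) · (∏_{s ∈ R∖S} p(s)) = −h_n · ∏_{s ∈ R} p(s) + ∑_{j=1}^{n} (1/(j · C(n, j))) · ∑_{T ⊆ R, |T| = n − j} ∏_{s ∈ T} p(s), where h_n = ∑_{j=1}^{n} 1/j is the n-th harmonic number and C(n, j) is the binomial coefficient. -/
/-!
With `f k = 1 / k` the left-hand side is `∑_S f |S| ∏_{s ∈ S} (1 - p s) ∏_{s ∉ S} p s`, the term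
`S = ∅` being killed by `1 / 0 = 0`. Applying the linear functional `X ^ k ↦ f k` to the
polynomial identity `∏_s ((1 - p s) X + p s) = ∏_s (p s (1 - X) + X)` shows that the coefficient
of `∏_{s ∈ U} p s` is `(-1) ^ m Δ^m f (n - m)` with `m = |U|`, an iterated forward difference of
`f`. For `j = n - m ≥ 1` this is the Beta value `1 / (j C(n, j))`; at `j = 0` the junk value
`f 0 = 0` turns it into `-h_n`.
-/
open Finset Polynomial
open scoped Nat

theorem sum_neg_one_pow_mul_choose_mul_eq_fwdDiff_iter {A : Type*} [CommRing A] (f : ℕ → A)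
    (m r : ℕ) :
    ∑ k ∈ range (m + 1), (-1) ^ k * (m.choose k : A) * f (k + r) =
      (-1) ^ m * (fwdDiff 1)^[m] f r := by
  rw [fwdDiff_iter_eq_sum_shift, mul_sum]
  refine sum_congr rfl fun k hk => ?_
  obtain ⟨j, rfl⟩ := Nat.exists_eq_add_of_le (mem_range_succ_iff.mp hk)
  rw [zsmul_eq_mul, Nat.add_sub_cancel_left, smul_eq_mul, mul_one, add_comm r]
  push_cast
  rw [pow_add]
  ring_nf
  simp

theorem fwdDiff_iter_addMonoidHom_comp {M G H F : Type*} [AddCommMonoid M] [AddCommGroup G]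
    [AddCommGroup H] [FunLike F G H] [AddMonoidHomClass F G H] (h : M) (e : F) (f : M → G)
    (m : ℕ) : (fwdDiff h)^[m] (e ∘ f) = e ∘ (fwdDiff h)^[m] f := by
  ext r
  simp only [Function.comp_apply, fwdDiff_iter_eq_sum_shift, map_sum, map_zsmul]

theorem fwdDiff_iter_inv_natCast_add_one (m r : ℕ) :
    (fwdDiff 1)^[m] (fun k : ℕ => (k : ℚ)⁻¹) (r + 1) = (-1) ^ m * m ! * r ! / (r + m + 1)! := by
  induction m generalizing r with
  | zero => simp [Nat.factorial_succ]; field_simp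
  | succ m ih =>
    rw [Function.iterate_succ_apply', fwdDiff, ih, ih, show r + 1 + m + 1 = r + m + 1 + 1 by ring,
      show r + (m + 1) + 1 = r + m + 1 + 1 by ring, Nat.factorial_succ (r + m + 1),
      Nat.factorial_succ m, Nat.factorial_succ r]
    push_cast
    field_simp
    ring

theorem fwdDiff_iter_inv_natCast_zero (m : ℕ) :
    (fwdDiff 1)^[m] (fun k : ℕ => (k : ℚ)⁻¹) 0 = (-1) ^ (m + 1) * harmonic m := by
  induction m with
  | zero => simp
  | succ m ih =>
    rw [Function.iterate_succ_apply', fwdDiff, ih, zero_add, fwdDiff_iter_inv_natCast_add_one,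
      harmonic_succ, zero_add]
    push_cast [Nat.factorial_succ]
    field_simp
    ring

theorem neg_one_pow_mul_fwdDiff_iter_inv_natCast {j n : ℕ} (hj : 0 < j) (hjn : j ≤ n) :
    (-1) ^ (n - j) * (fwdDiff 1)^[n - j] (fun k : ℕ => (k : ℚ)⁻¹) j = 1 / (j * n.choose j) := by
  obtain ⟨m, rfl⟩ := Nat.exists_eq_add_of_le hjn
  obtain ⟨r, rfl⟩ := Nat.exists_eq_add_of_lt hj
  rw [add_tsub_cancel_left, zero_add, fwdDiff_iter_inv_natCast_add_one, ← mul_div_assoc,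
    ← mul_assoc, ← mul_assoc, ← pow_add, ← two_mul, pow_mul, neg_one_sq, one_pow, one_mul,
    Nat.cast_add_choose, show r + 1 + m = r + m + 1 by ring, Nat.factorial_succ (r + m),
    Nat.factorial_succ r]
  push_cast
  field_simp

section Polynomial

variable {A : Type*} [CommRing A]

theorem one_sub_X_pow_mul_X_pow (m r : ℕ) :
    ((1 - X) ^ m * X ^ r : A[X]) =
      ∑ k ∈ range (m + 1), C ((-1) ^ k * (m.choose k : A)) * X ^ (k + r) := by
  rw [show (1 - X : A[X]) = C (-1) * X + 1 by simp [sub_eq_neg_add], add_pow, sum_mul]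
  refine sum_congr rfl fun k _ => ?_
  rw [map_mul, map_pow, map_natCast]
  ring

variable {ι : Type*} [Fintype ι] [DecidableEq ι]

theorem sum_C_prod_one_sub_mul_prod_compl_mul_X_pow (p : ι → A) :
    ∑ S : Finset ι, C ((∏ s ∈ S, (1 - p s)) * ∏ s ∈ Sᶜ, p s) * X ^ #S =
      ∑ U : Finset ι, C (∏ s ∈ U, p s) * ((1 - X) ^ #U * X ^ (Fintype.card ι - #U)) := by
  calc _ = ∏ s, (C (1 - p s) * X + C (p s)) := by
        rw [prod_add, powerset_univ]
        refine sum_congr rfl fun S _ => ?_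
        simp [prod_mul_distrib, compl_eq_univ_sdiff, map_prod]
        ring
    _ = ∏ s, (C (p s) * (1 - X) + X) := by
        congr! 1 with s; simp only [map_sub, map_one]; ring
    _ = _ := by
        rw [prod_add, powerset_univ]
        refine sum_congr rfl fun U _ => ?_
        simp [prod_mul_distrib, ← compl_eq_univ_sdiff, map_prod, card_compl, mul_assoc]

theorem sum_mul_prod_one_sub_mul_prod_compl (p : ι → A) (f : ℕ → A) :
    ∑ S : Finset ι, f #S * ((∏ s ∈ S, (1 - p s)) * ∏ s ∈ Sᶜ, p s) =
      ∑ U : Finset ι,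
        (-1) ^ #U * (fwdDiff 1)^[#U] f (Fintype.card ι - #U) * ∏ s ∈ U, p s := by
  let L : A[X] →ₗ[A] A := lsum fun k => LinearMap.mulRight A (f k)
  have hL : ∀ a k, L (C a * X ^ k) = a * f k := fun a k => by
    simp [L, C_mul_X_pow_eq_monomial]
  have hgen := congrArg L (sum_C_prod_one_sub_mul_prod_compl_mul_X_pow p)
  simp only [map_sum, hL, one_sub_X_pow_mul_X_pow, mul_sum, ← mul_assoc, ← map_mul] at hgen
  simp only [mul_comm (f _), hgen, ← sum_neg_one_pow_mul_choose_mul_eq_fwdDiff_iter, sum_mul]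
  exact sum_congr rfl fun _ _ => sum_congr rfl fun _ _ => by ring

end Polynomial

section Powerset

variable {ι R M : Type*} [Fintype ι] [Semiring R] [AddCommMonoid M] [Module R M]

theorem sum_range_smul_sum_powersetCard_univ (c : ℕ → R) (F : Finset ι → M) :
    ∑ i ∈ range (Fintype.card ι + 1), c i • ∑ S ∈ powersetCard i univ, F S =
      ∑ S : Finset ι, c #S • F S := by
  rw [← card_univ, ← powerset_univ, sum_powerset]
  refine sum_congr rfl fun i _ => ?_
  rw [smul_sum]
  exact sum_congr rfl fun S hS => by rw [(mem_powersetCard.mp hS).2]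

theorem sum_Icc_smul_sum_powersetCard_univ (c : ℕ → R) (hc : c 0 = 0) (F : Finset ι → M) :
    ∑ i ∈ Icc 1 (Fintype.card ι), c i • ∑ S ∈ powersetCard i univ, F S =
      ∑ S : Finset ι, c #S • F S := by
  rw [← sum_range_smul_sum_powersetCard_univ, Nat.range_succ_eq_Icc_zero,
    ← insert_Icc_add_one_left_eq_Icc (Nat.zero_le _), sum_insert (by simp), hc, zero_smul,
    zero_add, zero_add]

theorem sum_smul_eq_smul_univ_add_sum_Icc (c : ℕ → R) (F : Finset ι → M) :
    ∑ S : Finset ι, c #S • F S = c (Fintype.card ι) • F univ +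
      ∑ j ∈ Icc 1 (Fintype.card ι),
        c (Fintype.card ι - j) • ∑ S ∈ powersetCard (Fintype.card ι - j) univ, F S := by
  rw [← sum_range_smul_sum_powersetCard_univ, sum_range_succ, add_comm, ← card_univ,
    powersetCard_self, sum_singleton, ← Ico_add_one_right_eq_Icc,
    sum_Ico_reflect (fun m => c m • ∑ S ∈ powersetCard m univ, F S) 1 le_rfl]
  simp

end Powerset

theorem resolvent_expansion_eq41_general
    {A : Type*} [CommRing A] [Algebra ℚ A] {ι : Type*} [Fintype ι] [DecidableEq ι]
    (p : ι → A) (n : ℕ) (hcard : Fintype.card ι = n) :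
    ∑ i ∈ Finset.Icc 1 n, (1 / (i : ℚ)) •
        ∑ S ∈ Finset.powersetCard i (Finset.univ : Finset ι),
          (∏ s ∈ S, (1 - p s)) * ∏ s ∈ Sᶜ, p s =
    (-∑ j ∈ Finset.Icc 1 n, 1 / (j : ℚ)) • ∏ s, p s +
      ∑ j ∈ Finset.Icc 1 n, (1 / ((j : ℚ) * (Nat.choose n j : ℚ))) •
        ∑ T ∈ Finset.powersetCard (n - j) (Finset.univ : Finset ι),
          ∏ s ∈ T, p s := by
  subst hcard
  set c : ℕ → ℚ := fun m =>
    (-1) ^ m * (fwdDiff 1)^[m] (fun k : ℕ => (k : ℚ)⁻¹) (Fintype.card ι - m)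
  calc _ = ∑ S : Finset ι, (#S : ℚ)⁻¹ • ((∏ s ∈ S, (1 - p s)) * ∏ s ∈ Sᶜ, p s) := by
        simpa only [one_div] using
          sum_Icc_smul_sum_powersetCard_univ (fun i : ℕ => (i : ℚ)⁻¹) (by simp) _
    _ = ∑ U : Finset ι, c #U • ∏ s ∈ U, p s := by
        simpa [c, Algebra.smul_def, fwdDiff_iter_addMonoidHom_comp] using
          sum_mul_prod_one_sub_mul_prod_compl p (algebraMap ℚ A ∘ fun k : ℕ => (k : ℚ)⁻¹)
    _ = _ := by
        rw [sum_smul_eq_smul_univ_add_sum_Icc]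
        congr 1
        · simp [c, fwdDiff_iter_inv_natCast_zero, harmonic_eq_sum_Icc, pow_succ, ← mul_assoc,
            ← mul_pow]
        · refine sum_congr rfl fun j hj => ?_
          obtain ⟨hj, hjn⟩ := mem_Icc.mp hj
          simp only [c, Nat.sub_sub_self hjn, neg_one_pow_mul_fwdDiff_iter_inv_natCast hj hjn]

/-- The algebraic content of Eq. (41) of the paper: the explicit expansion of
`g̃(R)` (after factoring out `Δ̃ P₀` and the common projector `P_{Λ∖R}`),
`∑_{i=1}^n (1/i) P_i = -h_n ∏_s p_s + ∑_{j=1}^n (j C(n,j))⁻¹ ∑_{|T| = n-j} ∏_{s∈T} p_s`. -/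
theorem resolvent_expansion_eq41
    {A : Type*} [CommRing A] [Algebra ℚ A] {ι : Type*} [Fintype ι] [DecidableEq ι]
    (p : ι → A) (n : ℕ) (hn : 1 ≤ n) (hcard : Fintype.card ι = n) :
    ∑ i ∈ Finset.Icc 1 n, (1 / (i : ℚ)) •
        ∑ S ∈ Finset.powersetCard i (Finset.univ : Finset ι),
          (∏ s ∈ S, (1 - p s)) * ∏ s ∈ Sᶜ, p s =
    (-∑ j ∈ Finset.Icc 1 n, 1 / (j : ℚ)) • ∏ s, p s +
      ∑ j ∈ Finset.Icc 1 n, (1 / ((j : ℚ) * (Nat.choose n j : ℚ))) •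
        ∑ T ∈ Finset.powersetCard (n - j) (Finset.univ : Finset ι),
          ∏ s ∈ T, p s :=
  resolvent_expansion_eq41_general p n hcard
end
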